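/- arXiv:2406.00141 — 2 statements merged into one kernel-verified Lean document; each statement's English description precedes it below -/
import Mathlib

section
/- For all homogeneous a₁, a₂ in an MDG R-algebra A and homogeneous x in an MDG A-module X, one has [a₁,a₂,x] = (-1)^{|a₁||a₂|}[a₂,a₁,x] + (-1)^{|a₂||x|}[a₁,x,a₂]. -/
/-- `(-1)^n` as an integer, for `n : ℤ`. -/
def sgn (n : ℤ) : ℤ := ((Int.negOnePow n : ℤˣ) : ℤ)

/-- An MDG `R`-algebra: a ℤ-graded `R`-complex `M` centered data, with a chain-map
multiplication which is unital and strictly graded-commutative, but not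
necessarily associative. -/
structure MDGAlg (R : Type*) (M : Type*) [CommRing R] [AddCommGroup M] [Module R M] where
  grading : ℤ → Submodule R M
  internal : DirectSum.IsInternal grading
  mul : M →ₗ[R] M →ₗ[R] M
  d : M →ₗ[R] M
  one : M
  one_mem : one ∈ grading 0
  mul_mem : ∀ {i j : ℤ} {a b : M}, a ∈ grading i → b ∈ grading j → mul a b ∈ grading (i + j)
  d_mem : ∀ {i : ℤ} {a : M}, a ∈ grading i → d a ∈ grading (i - 1)
  d_sq : ∀ a : M, d (d a) = 0
  one_mul : ∀ a : M, mul one a = a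
  mul_one : ∀ a : M, mul a one = a
  gcomm : ∀ {i j : ℤ} {a b : M}, a ∈ grading i → b ∈ grading j →
    mul a b = sgn (i * j) • mul b a
  odd_sq : ∀ {i : ℤ} {a : M}, Odd i → a ∈ grading i → mul a a = 0
  leibniz : ∀ {i : ℤ} {a : M}, a ∈ grading i → ∀ b : M,
    d (mul a b) = mul (d a) b + sgn i • mul a (d b)

/-- An MDG module over an MDG algebra: unital and graded-commutative, not
necessarily associative.  Both the left and the right `A`-scalar multiplication
are recorded; graded-commutativity ties them together. -/
structure MDGMod (R M X : Type*) [CommRing R] [AddCommGroup M] [Module R M]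
    [AddCommGroup X] [Module R X] (A : MDGAlg R M) where
  grading : ℤ → Submodule R X
  internal : DirectSum.IsInternal grading
  smul : M →ₗ[R] X →ₗ[R] X
  smulR : X →ₗ[R] M →ₗ[R] X
  d : X →ₗ[R] X
  smul_mem : ∀ {i j : ℤ} {a : M} {x : X}, a ∈ A.grading i → x ∈ grading j →
    smul a x ∈ grading (i + j)
  d_mem : ∀ {i : ℤ} {x : X}, x ∈ grading i → d x ∈ grading (i - 1)
  d_sq : ∀ x : X, d (d x) = 0
  one_smul : ∀ x : X, smul A.one x = x
  smul_one : ∀ x : X, smulR x A.one = x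
  gcomm : ∀ {i j : ℤ} {a : M} {x : X}, a ∈ A.grading i → x ∈ grading j →
    smul a x = sgn (i * j) • smulR x a
  leibniz : ∀ {i : ℤ} {a : M}, a ∈ A.grading i → ∀ x : X,
    d (smul a x) = smul (A.d a) x + sgn i • smul a (d x)

section Defs

variable {R M X Y : Type*} [CommRing R] [AddCommGroup M] [Module R M]
  [AddCommGroup X] [Module R X] [AddCommGroup Y] [Module R Y]

/-- The associator `[a,b,c] = (ab)c - a(bc)` of an MDG algebra. -/
def ascA (A : MDGAlg R M) (a b c : M) : M :=
  A.mul (A.mul a b) c - A.mul a (A.mul b c)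

/-- The associator `[a,b,x] = (ab)x - a(bx)` of an MDG module. -/
def ascAAX {A : MDGAlg R M} (Xm : MDGMod R M X A) (a b : M) (x : X) : X :=
  Xm.smul (A.mul a b) x - Xm.smul a (Xm.smul b x)

/-- The associator `[x,a,b] = (xa)b - x(ab)`. -/
def ascXAA {A : MDGAlg R M} (Xm : MDGMod R M X A) (x : X) (a b : M) : X :=
  Xm.smulR (Xm.smulR x a) b - Xm.smulR x (A.mul a b)

/-- The associator `[a,x,b] = (ax)b - a(xb)`. -/
def ascAXA {A : MDGAlg R M} (Xm : MDGMod R M X A) (a : M) (x : X) (b : M) : X :=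
  Xm.smulR (Xm.smul a x) b - Xm.smul a (Xm.smulR x b)

/-- The multiplicator `[a,x]_φ = φ(ax) - aφ(x)` of a chain map `φ : X → Y`. -/
def multc {A : MDGAlg R M} (Xm : MDGMod R M X A) (Ym : MDGMod R M Y A)
    (φ : X →ₗ[R] Y) (a : M) (x : X) : Y :=
  φ (Xm.smul a x) - Ym.smul a (φ x)

/-- The right-sided multiplicator `[x,a]_φ = φ(xa) - φ(x)a`. -/
def multcR {A : MDGAlg R M} (Xm : MDGMod R M X A) (Ym : MDGMod R M Y A)
    (φ : X →ₗ[R] Y) (x : X) (a : M) : Y :=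
  φ (Xm.smulR x a) - Ym.smulR (φ x) a

/-- The associator `A`-submodule `⟨X⟩`: the smallest submodule of `X` containing
all associators and closed under the `A`-action and the differential. -/
def assocSub {A : MDGAlg R M} (Xm : MDGMod R M X A) : Submodule R X :=
  sInf {S : Submodule R X |
    (∀ (a : M) (x : X), x ∈ S → Xm.smul a x ∈ S) ∧
    (∀ x ∈ S, Xm.d x ∈ S) ∧
    ∀ (a b : M) (x : X), ascAAX Xm a b x ∈ S}

/-- The associator ideal `⟨A⟩` of an MDG algebra. -/
def assocIdeal (A : MDGAlg R M) : Submodule R M :=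
  sInf {S : Submodule R M |
    (∀ (a : M) (x : M), x ∈ S → A.mul a x ∈ S) ∧
    (∀ x ∈ S, A.d x ∈ S) ∧
    ∀ a b c : M, ascA A a b c ∈ S}

end Defs

theorem sgn_add (m n : ℤ) : sgn (m + n) = sgn m * sgn n := by
  simp only [sgn, Int.negOnePow_add, Units.val_mul]

theorem sgn_mul_self (n : ℤ) : sgn n * sgn n = 1 := by
  simp only [sgn, ← Units.val_mul, Int.units_mul_self, Units.val_one]

namespace MDGMod

variable {R M X : Type*} [CommRing R] [AddCommGroup M] [Module R M]
  [AddCommGroup X] [Module R X] {A : MDGAlg R M} (Xm : MDGMod R M X A)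
  {i j k : ℤ} {a b : M} {x : X}

theorem smul_mul_comm (ha : a ∈ A.grading i) (hb : b ∈ A.grading j) (x : X) :
    Xm.smul (A.mul a b) x = sgn (i * j) • Xm.smul (A.mul b a) x := by
  rw [A.gcomm ha hb, map_zsmul, LinearMap.smul_apply]

theorem smul_smul_eq_smul_smulR (a : M) (hb : b ∈ A.grading j) (hx : x ∈ Xm.grading k) :
    Xm.smul a (Xm.smul b x) = sgn (j * k) • Xm.smul a (Xm.smulR x b) := by
  rw [Xm.gcomm hb hx, map_zsmul]

end MDGMod

/-- `[a₁,a₂,x] = (-1)^{|a₁||a₂|}[a₂,a₁,x] + (-1)^{|a₂||x|}[a₁,x,a₂]`. -/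
theorem stmt3 {R M X : Type*} [CommRing R] [AddCommGroup M] [Module R M]
    [AddCommGroup X] [Module R X] (A : MDGAlg R M) (Xm : MDGMod R M X A)
    {i j k : ℤ} {a₁ a₂ : M} {x : X}
    (h₁ : a₁ ∈ A.grading i) (h₂ : a₂ ∈ A.grading j) (hx : x ∈ Xm.grading k) :
    ascAAX Xm a₁ a₂ x =
      sgn (i * j) • ascAAX Xm a₂ a₁ x + sgn (j * k) • ascAXA Xm a₁ x a₂ := by
  have h₂₁ : Xm.smul a₂ (Xm.smul a₁ x) = sgn (j * (i + k)) • Xm.smulR (Xm.smul a₁ x) a₂ :=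
    Xm.gcomm h₂ (Xm.smul_mem h₁ hx)
  -- the two terms `(a₁x)a₂` on the right cancel
  have hsign : sgn (i * j) * sgn (j * (i + k)) = sgn (j * k) := by
    rw [show j * (i + k) = i * j + j * k by ring, sgn_add, ← mul_assoc, sgn_mul_self, one_mul]
  unfold ascAAX ascAXA
  rw [Xm.smul_mul_comm h₁ h₂, Xm.smul_smul_eq_smul_smulR a₁ h₂ hx, h₂₁, smul_sub, smul_sub,
    smul_smul, hsign]
  abel
end

section
/- Let (R,m) be a local ring, A an MDG R-algebra, X an MDG A-module such that the associator submodule ⟨X⟩ is minimal (d⟨X⟩ ⊆ m⟨X⟩) with each ⟨X⟩ᵢ a finitely generated R-module. If ⟨X⟩ᵢ = 0 and H_{i+1}(⟨X⟩) = 0, then ⟨X⟩_{i+1} = 0. -/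
theorem iSupIndep.iSup_inf_eq {α ι : Type*} [CompleteLattice α] [IsModularLattice α]
    {t : ι → α} (ht : iSupIndep t) {s : ι → α} (hst : ∀ n, s n ≤ t n) (j : ι) :
    (⨆ n, s n) ⊓ t j = s j := by
  have hrest : (⨆ (n) (_ : n ≠ j), s n) ⊓ t j = ⊥ :=
    (ht j).symm.mono_left (iSup₂_mono fun n _ => hst n) |>.eq_bot
  rw [iSup_split_single s j, sup_inf_assoc_of_le _ (hst j), hrest, sup_bot_eq]

section GradedComplex

variable {R X : Type*} [CommRing R] [AddCommGroup X] [Module R X]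

theorem Submodule.smul_inf_eq_of_eq_iSup_inf {ι : Type*} {𝒜 : ι → Submodule R X}
    (h𝒜 : iSupIndep 𝒜) (I : Ideal R) {S : Submodule R X} (hS : S = ⨆ n, S ⊓ 𝒜 n) (j : ι) :
    (I • S) ⊓ 𝒜 j = I • (S ⊓ 𝒜 j) := by
  conv_lhs => rw [hS, Submodule.smul_iSup]
  exact h𝒜.iSup_inf_eq (fun n => Submodule.smul_le_right.trans inf_le_right) j

/-- A cycle of `S` in degree `i + 1` is a boundary, hence lies in `𝔪 S` by minimality; so the
finitely generated piece `S_{i+1}` equals `𝔪 S_{i+1}`, and Nakayama's lemma applies. -/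
theorem Submodule.inf_eq_bot_of_isMinimal_of_exact [IsLocalRing R] (d : X →ₗ[R] X)
    {𝒜 : ℤ → Submodule R X} (h𝒜 : iSupIndep 𝒜)
    (hd : ∀ {n : ℤ} {x : X}, x ∈ 𝒜 n → d x ∈ 𝒜 (n - 1))
    {S : Submodule R X} (hSd : ∀ x ∈ S, d x ∈ S) (hgraded : S = ⨆ n, S ⊓ 𝒜 n)
    (hmin : ∀ x ∈ S, d x ∈ IsLocalRing.maximalIdeal R • S) {i : ℤ}
    (hfg : (S ⊓ 𝒜 (i + 1)).FG) (hzero : S ⊓ 𝒜 i = ⊥)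
    (hexact : ∀ x ∈ S ⊓ 𝒜 (i + 1), d x = 0 → ∃ y ∈ S ⊓ 𝒜 (i + 2), d y = x) :
    S ⊓ 𝒜 (i + 1) = ⊥ := by
  refine Submodule.eq_bot_of_le_smul_of_le_jacobson_bot _ _ hfg ?_
    (IsLocalRing.maximalIdeal_le_jacobson ⊥)
  rintro x hx
  have hdx : d x = 0 := by
    have hdx_mem : d x ∈ S ⊓ 𝒜 i := ⟨hSd x hx.1, by simpa using hd hx.2⟩
    rwa [hzero, Submodule.mem_bot] at hdx_mem
  obtain ⟨y, hy, rfl⟩ := hexact x hx hdx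
  rw [← Submodule.smul_inf_eq_of_eq_iSup_inf h𝒜 _ hgraded]
  exact ⟨hmin y hy.1, hx.2⟩

end GradedComplex

theorem assocSub_d_mem {R M X : Type*} [CommRing R] [AddCommGroup M] [Module R M]
    [AddCommGroup X] [Module R X] {A : MDGAlg R M} (Xm : MDGMod R M X A) {x : X}
    (hx : x ∈ assocSub Xm) : Xm.d x ∈ assocSub Xm := by
  rw [assocSub, Submodule.mem_sInf] at hx ⊢
  exact fun S hS => hS.2.1 x (hx S hS)

/-- Over a local ring, if the associator submodule `⟨X⟩` is a minimal graded
complex with finitely generated graded pieces, vanishes in degree `i`, and its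
homology vanishes in degree `i+1`, then `⟨X⟩` vanishes in degree `i+1`. -/
theorem stmt10 {R M X : Type*} [CommRing R] [IsLocalRing R]
    [AddCommGroup M] [Module R M] [AddCommGroup X] [Module R X]
    (A : MDGAlg R M) (Xm : MDGMod R M X A) (i : ℤ)
    (hgraded : assocSub Xm = ⨆ n : ℤ, assocSub Xm ⊓ Xm.grading n)
    (hmin : ∀ x ∈ assocSub Xm,
      Xm.d x ∈ (IsLocalRing.maximalIdeal R) • assocSub Xm)
    (hfg : ∀ n : ℤ, (assocSub Xm ⊓ Xm.grading n).FG)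
    (hzero : assocSub Xm ⊓ Xm.grading i = ⊥)
    (hhomology : ∀ x ∈ assocSub Xm ⊓ Xm.grading (i + 1), Xm.d x = 0 →
      ∃ y ∈ assocSub Xm ⊓ Xm.grading (i + 2), Xm.d y = x) :
    assocSub Xm ⊓ Xm.grading (i + 1) = ⊥ :=
  Submodule.inf_eq_bot_of_isMinimal_of_exact Xm.d Xm.internal.submodule_iSupIndep Xm.d_mem
    (fun _ => assocSub_d_mem Xm) hgraded hmin (hfg (i + 1)) hzero hhomology
end
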